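/- For c ≥ 1, 0 ≤ θ ≤ 1, and p ∈ ℝ³, the vector w_θ(p) = [∇v_c^θ(p)]^{−1}(p − v_c(p)) equals ((1 − 1/γ_c(p))/(θ/γ_c(p)³ + 1 − θ))·p, and satisfies |w_θ(p)| ≤ γ_c(p)|p|³/c². -/

import Mathlib

/-!
`∇v_c^θ(p) = α I − β p pᵀ` with `α = θ/γ + 1 − θ`, `β = θ/(γ³c²)` is a rank-one perturbation of
a multiple of the identity: `p` is an eigenvector with eigenvalue `α − β|p|² = θ/γ³ + 1 − θ`
(as `|p|²/c² = γ² − 1`), and by the matrix determinant lemma the only other eigenvalue is `α`.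
For `θ ≤ 1` both are positive, so `w_θ(p)` is `(1 − 1/γ)/(θ/γ³ + 1 − θ)` times `p`; moreover
`γ³(θ/γ³ + 1 − θ) ≥ 1`, which turns the bound into `(γ − 1)γ²|p| ≤ γ(γ² − 1)|p| = γ|p|³/c²`.
-/

noncomputable section

/-- The relativistic Lorentz factor `γ_c(p) = √(1 + |p|²/c²)`. -/
def gam (c : ℝ) (p : EuclideanSpace ℝ (Fin 3)) : ℝ := Real.sqrt (1 + ‖p‖ ^ 2 / c ^ 2)

/-- The relativistic velocity `v_c(p) = p / γ_c(p)`. -/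
def vel (c : ℝ) (p : EuclideanSpace ℝ (Fin 3)) : EuclideanSpace ℝ (Fin 3) :=
  (gam c p)⁻¹ • p

/-- The Jacobian of the interpolated velocity
`∇v_c^θ(p) = (θ/γ_c(p) + 1−θ) I₃ − (θ/γ_c(p)³) (p_i p_j / c²)_{i,j}`. -/
def Dv (θ c : ℝ) (p : EuclideanSpace ℝ (Fin 3)) : Matrix (Fin 3) (Fin 3) ℝ :=
  (θ / gam c p + (1 - θ)) • (1 : Matrix (Fin 3) (Fin 3) ℝ) -
    (θ / (gam c p) ^ 3) • Matrix.of fun i j => p i * p j / c ^ 2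

/-- The vector `w_θ(p) = [∇v_c^θ(p)]⁻¹ (p − v_c(p))`, regarded as an element of
Euclidean space. -/
def wvec (θ c : ℝ) (p : EuclideanSpace ℝ (Fin 3)) : EuclideanSpace ℝ (Fin 3) :=
  (WithLp.equiv 2 (Fin 3 → ℝ)).symm
    ((Dv θ c p)⁻¹.mulVec (WithLp.equiv 2 (Fin 3 → ℝ) (p - vel c p)))

open Matrix

namespace Matrix

variable {n K : Type*} [Fintype n] [DecidableEq n] [Field K]

theorem smul_one_sub_smul_vecMulVec_mulVec (α β : K) (u v : n → K) :
    (α • (1 : Matrix n n K) - β • vecMulVec u v) *ᵥ u = (α - β * (v ⬝ᵥ u)) • u := by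
  rw [sub_mulVec, smul_mulVec, smul_mulVec, one_mulVec, vecMulVec_mulVec, op_smul_eq_smul,
    sub_smul, mul_smul]

theorem det_smul_one_sub_smul_vecMulVec {α : K} (hα : α ≠ 0) (β : K) (u v : n → K) :
    (α • (1 : Matrix n n K) - β • vecMulVec u v).det =
      α ^ Fintype.card n * (1 - β / α * (v ⬝ᵥ u)) := by
  have hfactor : α • (1 : Matrix n n K) - β • vecMulVec u v =
      α • (1 + replicateCol Unit ((-β / α) • u) * replicateRow Unit v) := by
    rw [← vecMulVec_eq, smul_add, smul_vecMulVec, smul_smul, mul_div_cancel₀ _ hα, neg_smul,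
      ← sub_eq_add_neg]
  rw [hfactor, det_smul, det_one_add_replicateCol_mul_replicateRow, dotProduct_smul, smul_eq_mul]
  ring

theorem inv_smul_one_sub_smul_vecMulVec_mulVec {α β : K} (hα : α ≠ 0) (u v : n → K)
    (hev : α - β * (v ⬝ᵥ u) ≠ 0) :
    (α • (1 : Matrix n n K) - β • vecMulVec u v)⁻¹ *ᵥ u = (α - β * (v ⬝ᵥ u))⁻¹ • u := by
  set A := α • (1 : Matrix n n K) - β • vecMulVec u v
  have hdet : IsUnit A.det := by
    rw [det_smul_one_sub_smul_vecMulVec hα, isUnit_iff_ne_zero]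
    refine mul_ne_zero (pow_ne_zero _ hα) fun h => hev ?_
    field_simp at h
    linear_combination h
  have := invertibleOfIsUnitDet A hdet
  refine inv_mulVec_eq_vec ?_
  rw [mulVec_smul, smul_one_sub_smul_vecMulVec_mulVec, smul_smul, inv_mul_cancel₀ hev, one_smul]

end Matrix

theorem one_le_mul_div_add_one_sub {x θ : ℝ} (hx : 1 ≤ x) (hθ : θ ≤ 1) :
    1 ≤ x * (θ / x + 1 - θ) := by
  have hx0 : x ≠ 0 := by positivity
  have hexpand : x * (θ / x + 1 - θ) = 1 + (1 - θ) * (x - 1) := by field_simp; ring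
  rw [hexpand]
  nlinarith

theorem pos_div_add_one_sub {x θ : ℝ} (hx : 1 ≤ x) (hθ : θ ≤ 1) : 0 < θ / x + 1 - θ :=
  pos_of_mul_pos_right (one_pos.trans_le (one_le_mul_div_add_one_sub hx hθ)) (by positivity)

section Relativistic

variable (c : ℝ) (p : EuclideanSpace ℝ (Fin 3))

theorem gam_sq : gam c p ^ 2 = 1 + ‖p‖ ^ 2 / c ^ 2 := Real.sq_sqrt (by positivity)

theorem one_le_gam : 1 ≤ gam c p := Real.one_le_sqrt.2 (le_add_of_nonneg_right (by positivity))

theorem Dv_eq_smul_one_sub_smul_vecMulVec (θ : ℝ) :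
    Dv θ c p = (θ / gam c p + (1 - θ)) • (1 : Matrix (Fin 3) (Fin 3) ℝ) -
      (θ / gam c p ^ 3 / c ^ 2) • vecMulVec p.ofLp p.ofLp := by
  rw [Dv]
  congr 1
  ext i j
  simp only [Matrix.smul_apply, of_apply, vecMulVec_apply, smul_eq_mul]
  ring

theorem Dv_inv_mulVec {θ : ℝ} (hθ : θ ≤ 1) :
    (Dv θ c p)⁻¹ *ᵥ p.ofLp = (θ / gam c p ^ 3 + 1 - θ)⁻¹ • p.ofLp := by
  have hγ := one_le_gam c p
  have hγ0 : gam c p ≠ 0 := by positivity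
  have heigen : θ / gam c p + (1 - θ) - θ / gam c p ^ 3 / c ^ 2 * (p.ofLp ⬝ᵥ p.ofLp) =
      θ / gam c p ^ 3 + 1 - θ := by
    have hnorm : p.ofLp ⬝ᵥ p.ofLp = ‖p‖ ^ 2 := by
      rw [← real_inner_self_eq_norm_sq, EuclideanSpace.inner_eq_star_dotProduct, star_trivial]
    rw [hnorm, div_mul_eq_mul_div, mul_div_assoc, ← sub_eq_iff_eq_add'.2 (gam_sq c p)]
    field_simp
    ring
  rw [Dv_eq_smul_one_sub_smul_vecMulVec, inv_smul_one_sub_smul_vecMulVec_mulVec, heigen]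
  · rw [← add_sub_assoc]
    exact (pos_div_add_one_sub hγ hθ).ne'
  · rw [heigen]
    exact (pos_div_add_one_sub (one_le_pow₀ hγ) hθ).ne'

theorem wvec_eq {θ : ℝ} (hθ : θ ≤ 1) :
    wvec θ c p = ((1 - 1 / gam c p) / (θ / gam c p ^ 3 + 1 - θ)) • p := by
  have hsub : p - vel c p = (1 - 1 / gam c p) • p := by rw [vel, one_div, sub_smul, one_smul]
  rw [wvec, hsub]
  ext i
  simp [mulVec_smul, Dv_inv_mulVec c p hθ, div_eq_mul_inv, mul_assoc]

theorem norm_wvec_le {θ : ℝ} (hθ : θ ≤ 1) : ‖wvec θ c p‖ ≤ gam c p * ‖p‖ ^ 3 / c ^ 2 := by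
  set γ := gam c p
  set a := θ / γ ^ 3 + 1 - θ
  have hγ : 1 ≤ γ := one_le_gam c p
  have hγ0 : 0 < γ := one_pos.trans_le hγ
  have ha : 0 < a := pos_div_add_one_sub (one_le_pow₀ hγ) hθ
  have haγ : 1 ≤ γ ^ 3 * a := one_le_mul_div_add_one_sub (one_le_pow₀ hγ) hθ
  have hfactor_nonneg : 0 ≤ (1 - 1 / γ) / a := by
    have : 1 / γ ≤ 1 := (div_le_one hγ0).2 hγ
    exact div_nonneg (by linarith) ha.le
  have hfactor_le : (1 - 1 / γ) / a ≤ (γ - 1) * γ ^ 2 := by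
    rw [div_le_iff₀ ha, one_sub_div hγ0.ne', div_le_iff₀ hγ0]
    nlinarith
  calc ‖wvec θ c p‖ = (1 - 1 / γ) / a * ‖p‖ := by
        rw [wvec_eq c p hθ, norm_smul, Real.norm_of_nonneg hfactor_nonneg]
    _ ≤ (γ - 1) * γ ^ 2 * ‖p‖ := by gcongr
    _ ≤ γ * (γ ^ 2 - 1) * ‖p‖ := mul_le_mul_of_nonneg_right (by nlinarith) (norm_nonneg p)
    _ = γ * ‖p‖ ^ 3 / c ^ 2 := by rw [gam_sq c p]; ring

end Relativistic

theorem stmt8_general (θ c : ℝ) (hθ1 : θ ≤ 1)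
    (p : EuclideanSpace ℝ (Fin 3)) :
    wvec θ c p = ((1 - 1 / gam c p) / (θ / (gam c p) ^ 3 + 1 - θ)) • p ∧
      ‖wvec θ c p‖ ≤ gam c p * ‖p‖ ^ 3 / c ^ 2 :=
  ⟨wvec_eq c p hθ1, norm_wvec_le c p hθ1⟩

theorem stmt8 (θ c : ℝ) (hθ0 : 0 ≤ θ) (hθ1 : θ ≤ 1) (hc : 1 ≤ c)
    (p : EuclideanSpace ℝ (Fin 3)) :
    wvec θ c p = ((1 - 1 / gam c p) / (θ / (gam c p) ^ 3 + 1 - θ)) • p ∧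
      ‖wvec θ c p‖ ≤ gam c p * ‖p‖ ^ 3 / c ^ 2 :=
  stmt8_general θ c hθ1 p
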